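/- arXiv:1502.05457 — 2 statements merged into one kernel-verified Lean document; each statement's English description precedes it below -/
import Mathlib

section
/- Let {e_ℓ}_{ℓ∈I} be a finite orthonormal family in L²([0,1],μ) of bounded functions, with span S and orthogonal projection Π_S, and set θ_ℓ = E[Y e_ℓ(X)]. Define θ̂_n = (n(n−1))⁻¹ Σ_{i≠j} Σ_{ℓ∈I} [Y_i e_ℓ(X_i)]·[Y_j e_ℓ(X_j)], R̂_n = θ̂_n + ‖f₀‖²_{L²(μ)} − (2/n) Σ_{i=1}^n Y_i f₀(X_i), Ũ_n = (n(n−1))⁻¹ Σ_{i≠j} Σ_{ℓ∈I} (Y_i e_ℓ(X_i) − θ_ℓ)·(Y_j e_ℓ(X_j) − θ_ℓ), and for bounded measurable w, (P_n − P)(w) = (1/n) Σ_{i=1}^n Y_i w(X_i) − ⟨f, w⟩_{L²(μ)}. Then θ_ℓ = ⟨f, e_ℓ⟩_{L²(μ)} for every ℓ, and almost surely R̂_n = Ũ_n + 2(P_n − P)(Π_S(f) − f) − ‖f − Π_S(f)‖²_{L²(μ)} + 2(P_n − P)(f − f₀) + ‖f − f₀‖²_{L²(μ)}. -/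
open MeasureTheory

noncomputable section

namespace Stmt6

/-- The U-statistic `θ̂_n = (n(n−1))⁻¹ Σ_{i≠j} Σ_ℓ [Yᵢ e_ℓ(Xᵢ)]·[Yⱼ e_ℓ(Xⱼ)]`. -/
def thetaHat {ι : Type} [Fintype ι] (e : ι → ℝ → ℝ) (n : ℕ)
    (ω : Fin n → ℝ × ℝ) : ℝ :=
  (1 / ((n : ℝ) * ((n : ℝ) - 1))) *
    ∑ i : Fin n, ∑ j : Fin n,
      if i ≠ j then
        ∑ l : ι, ((ω i).2 * e l (ω i).1) * ((ω j).2 * e l (ω j).1)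
      else 0

/-- `R̂_n = θ̂_n + ‖f₀‖²_{L²(μ)} − (2/n) Σ_i Yᵢ f₀(Xᵢ)`. -/
def RHat {ι : Type} [Fintype ι] (e : ι → ℝ → ℝ) (f₀ : ℝ → ℝ) (μ : Measure ℝ)
    (n : ℕ) (ω : Fin n → ℝ × ℝ) : ℝ :=
  thetaHat e n ω + (∫ x, (f₀ x) ^ 2 ∂μ) - (2 / (n : ℝ)) * ∑ i : Fin n, (ω i).2 * f₀ (ω i).1

/-- The degenerate U-statistic
`Ũ_n = (n(n−1))⁻¹ Σ_{i≠j} Σ_ℓ (Yᵢ e_ℓ(Xᵢ) − θ_ℓ)·(Yⱼ e_ℓ(Xⱼ) − θ_ℓ)`. -/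
def Utilde {ι : Type} [Fintype ι] (e : ι → ℝ → ℝ) (θ : ι → ℝ) (n : ℕ)
    (ω : Fin n → ℝ × ℝ) : ℝ :=
  (1 / ((n : ℝ) * ((n : ℝ) - 1))) *
    ∑ i : Fin n, ∑ j : Fin n,
      if i ≠ j then
        ∑ l : ι, ((ω i).2 * e l (ω i).1 - θ l) * ((ω j).2 * e l (ω j).1 - θ l)
      else 0

/-- The centered empirical functional `(P_n − P)(w) = (1/n) Σ_i Yᵢ w(Xᵢ) − ⟨f, w⟩_{L²(μ)}`. -/
def PnP (μ : Measure ℝ) (f w : ℝ → ℝ) (n : ℕ) (ω : Fin n → ℝ × ℝ) : ℝ :=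
  (1 / (n : ℝ)) * (∑ i : Fin n, (ω i).2 * w (ω i).1) - ∫ x, f x * w x ∂μ

lemma integrable_of_bdd {μ : Measure ℝ} [IsFiniteMeasure μ] {g : ℝ → ℝ}
    (hg : Measurable g) {b : ℝ} (hb : ∀ x, |g x| ≤ b) : Integrable g μ :=
  ⟨hg.aestronglyMeasurable,
    HasFiniteIntegral.of_bounded (C := b) (Filter.Eventually.of_forall fun x => by
      simpa [Real.norm_eq_abs] using hb x)⟩

lemma integrable_mul_of_bdd {μ : Measure ℝ} [IsFiniteMeasure μ] {g h : ℝ → ℝ}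
    (hg : Measurable g) (hh : Measurable h) {bg bh : ℝ}
    (hbg : ∀ x, |g x| ≤ bg) (hbh : ∀ x, |h x| ≤ bh) :
    Integrable (fun x => g x * h x) μ :=
  integrable_of_bdd (hg.mul hh) (b := bg * bh) fun x => by
    rw [abs_mul]
    exact mul_le_mul (hbg x) (hbh x) (abs_nonneg _) (le_trans (abs_nonneg _) (hbg x))

lemma pair_sum (n : ℕ) (u : Fin n → ℝ) (K : ℝ) :
    (∑ i : Fin n, ∑ j : Fin n, if i ≠ j then (u i + u j + K) else 0)
      = 2 * ((n : ℝ) - 1) * (∑ i, u i) + (n : ℝ) * ((n : ℝ) - 1) * K := by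
  have h1 : ∀ i : Fin n, (∑ j : Fin n, if i ≠ j then (u i + u j + K) else 0)
      = (∑ j : Fin n, (u i + u j + K)) - (u i + u i + K) := by
    intro i
    have : ∀ j : Fin n, (if i ≠ j then (u i + u j + K) else 0)
        = (u i + u j + K) - (if i = j then (u i + u j + K) else 0) := by
      intro j; by_cases h : i = j <;> simp [h]
    rw [Finset.sum_congr rfl fun j _ => this j, Finset.sum_sub_distrib,
      Finset.sum_ite_eq]
    simp
  rw [Finset.sum_congr rfl fun i _ => h1 i]
  simp [Finset.sum_add_distrib, Finset.sum_sub_distrib, Finset.sum_const,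
    Finset.card_univ, ← Finset.mul_sum]
  ring

theorem key
    (ι : Type) [Fintype ι] [DecidableEq ι] (e : ι → ℝ → ℝ)
    (μ : Measure ℝ) [IsProbabilityMeasure μ]
    (f f₀ : ℝ → ℝ) (n : ℕ) (hn : 2 ≤ n)
    (hemeas : ∀ l, Measurable (e l))
    (hebdd : ∀ l, ∃ b : ℝ, ∀ x, |e l x| ≤ b)
    (hortho : ∀ l l', (∫ x, e l x * e l' x ∂μ) = if l = l' then 1 else 0)
    (hfmeas : Measurable f) (hfbdd : ∃ b : ℝ, ∀ x, |f x| ≤ b)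
    (hf₀meas : Measurable f₀) (hf₀bdd : ∃ b : ℝ, ∀ x, |f₀ x| ≤ b)
    (ω : Fin n → ℝ × ℝ) :
    RHat e f₀ μ n ω
        = Utilde e (fun l => ∫ x, f x * e l x ∂μ) n ω
          + 2 * PnP μ f
              (fun x => (∑ l : ι, (∫ x', f x' * e l x' ∂μ) * e l x) - f x) n ω
          - (∫ x, (f x - ∑ l : ι, (∫ x', f x' * e l x' ∂μ) * e l x) ^ 2 ∂μ)
          + 2 * PnP μ f (fun x => f x - f₀ x) n ω
          + (∫ x, (f x - f₀ x) ^ 2 ∂μ) := by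
  obtain ⟨bf, hbf⟩ := hfbdd
  obtain ⟨bf₀, hbf₀⟩ := hf₀bdd
  choose be hbe using hebdd
  set θ : ι → ℝ := fun l => ∫ x, f x * e l x ∂μ with hθdef
  have hn1 : (n : ℝ) ≠ 0 := by positivity
  have hn2 : (n : ℝ) - 1 ≠ 0 := by
    have : (2 : ℝ) ≤ (n : ℝ) := by exact_mod_cast hn
    intro h; linarith
  -- integrability
  have hfe : ∀ l, Integrable (fun x => f x * e l x) μ := fun l =>
    integrable_mul_of_bdd hfmeas (hemeas l) hbf (hbe l)
  have hff : Integrable (fun x => f x * f x) μ :=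
    integrable_mul_of_bdd hfmeas hfmeas hbf hbf
  have hff₀ : Integrable (fun x => f x * f₀ x) μ :=
    integrable_mul_of_bdd hfmeas hf₀meas hbf hbf₀
  have hf₀f₀ : Integrable (fun x => f₀ x * f₀ x) μ :=
    integrable_mul_of_bdd hf₀meas hf₀meas hbf₀ hbf₀
  have hee : ∀ l l', Integrable (fun x => e l x * e l' x) μ := fun l l' =>
    integrable_mul_of_bdd (hemeas l) (hemeas l') (hbe l) (hbe l')
  set F : ℝ := ∫ x, f x * f x ∂μ with hF
  set G : ℝ := ∫ x, f x * f₀ x ∂μ with hG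
  set H : ℝ := ∫ x, f₀ x * f₀ x ∂μ with hH
  set K : ℝ := ∑ l, θ l * θ l with hK
  have hsumfe : Integrable (fun x => ∑ l, θ l * (f x * e l x)) μ :=
    integrable_finset_sum _ fun l _ => (hfe l).const_mul (θ l)
  have hIfP : (∫ x, ∑ l, θ l * (f x * e l x) ∂μ) = K := by
    rw [integral_finset_sum _ fun l _ => (hfe l).const_mul (θ l)]
    exact Finset.sum_congr rfl fun l _ => by rw [integral_const_mul]
  -- E1 : ∫ f (Πf − f) = K − F
  have hE1 : (∫ x, f x * ((∑ l, θ l * e l x) - f x) ∂μ) = K - F := by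
    have hpt : ∀ x, f x * ((∑ l, θ l * e l x) - f x)
        = (∑ l, θ l * (f x * e l x)) - f x * f x := by
      intro x
      rw [mul_sub, Finset.mul_sum]
      congr 1
      exact Finset.sum_congr rfl fun l _ => by ring
    simp only [hpt]
    rw [integral_sub hsumfe hff, hIfP]
  -- pointwise double-sum expansion of (Πf)²
  have hptP : ∀ x, (∑ l, θ l * e l x) * (∑ l', θ l' * e l' x)
      = ∑ l, ∑ l', (θ l * θ l') * (e l x * e l' x) := by
    intro x
    rw [Finset.sum_mul_sum]
    exact Finset.sum_congr rfl fun l _ => Finset.sum_congr rfl fun l' _ => by ring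
  have hPPint : Integrable (fun x => (∑ l, θ l * e l x) * (∑ l', θ l' * e l' x)) μ := by
    refine (integrable_finset_sum (μ := μ) Finset.univ
      (fun l (_ : l ∈ Finset.univ) =>
        integrable_finset_sum Finset.univ fun l' _ => (hee l l').const_mul (θ l * θ l'))).congr
      (Filter.Eventually.of_forall fun x => (hptP x).symm)
  have hPP : (∫ x, (∑ l, θ l * e l x) * (∑ l', θ l' * e l' x) ∂μ) = K := by
    simp only [hptP]
    rw [integral_finset_sum _ fun l _ =>
      integrable_finset_sum _ fun l' _ => (hee l l').const_mul _]
    rw [hK]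
    refine Finset.sum_congr rfl fun l _ => ?_
    rw [integral_finset_sum _ fun l' _ => (hee l l').const_mul _]
    have h2 : ∀ l' : ι, (∫ x, (θ l * θ l') * (e l x * e l' x) ∂μ)
        = if l = l' then θ l * θ l' else 0 := by
      intro l'
      rw [integral_const_mul, hortho l l']
      by_cases h : l = l' <;> simp [h]
    rw [Finset.sum_congr rfl fun l' _ => h2 l', Finset.sum_ite_eq]
    simp
  -- E2 : ∫ (f − Πf)² = F − K
  have hE2 : (∫ x, (f x - ∑ l, θ l * e l x) ^ 2 ∂μ) = F - K := by
    have hpt : ∀ x, (f x - ∑ l, θ l * e l x) ^ 2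
        = (f x * f x - 2 * (∑ l, θ l * (f x * e l x)))
          + (∑ l, θ l * e l x) * (∑ l', θ l' * e l' x) := by
      intro x
      have h2 : f x * (∑ l, θ l * e l x) = ∑ l, θ l * (f x * e l x) := by
        rw [Finset.mul_sum]
        exact Finset.sum_congr rfl fun l _ => by ring
      calc (f x - ∑ l, θ l * e l x) ^ 2
          = (f x * f x - 2 * (f x * (∑ l, θ l * e l x)))
            + (∑ l, θ l * e l x) * (∑ l', θ l' * e l' x) := by ring
        _ = _ := by rw [h2]
    simp only [hpt]
    have h1 : Integrable (fun x => f x * f x - 2 * ∑ l, θ l * (f x * e l x)) μ :=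
      hff.sub (hsumfe.const_mul 2)
    rw [integral_add h1 hPPint, integral_sub hff (hsumfe.const_mul 2),
      integral_const_mul, hIfP, hPP]
    ring
  -- E3 : ∫ f (f − f₀) = F − G
  have hE3 : (∫ x, f x * (f x - f₀ x) ∂μ) = F - G := by
    have hpt : ∀ x, f x * (f x - f₀ x) = f x * f x - f x * f₀ x := fun x => by ring
    simp only [hpt]
    rw [integral_sub hff hff₀]
  -- E4 : ∫ (f − f₀)² = F − 2G + H
  have hE4 : (∫ x, (f x - f₀ x) ^ 2 ∂μ) = F - 2 * G + H := by
    have hpt : ∀ x, (f x - f₀ x) ^ 2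
        = (f x * f x - 2 * (f x * f₀ x)) + f₀ x * f₀ x := fun x => by ring
    simp only [hpt]
    have h1 : Integrable (fun x => f x * f x - 2 * (f x * f₀ x)) μ :=
      hff.sub (hff₀.const_mul 2)
    rw [integral_add h1 hf₀f₀, integral_sub hff (hff₀.const_mul 2),
      integral_const_mul]
  have hHpow : (∫ x, (f₀ x) ^ 2 ∂μ) = H := by
    rw [hH]; exact integral_congr_ae (Filter.Eventually.of_forall fun x => by ring)
  -- algebraic part
  set a : Fin n → ι → ℝ := fun i l => (ω i).2 * e l (ω i).1 with ha
  set u : Fin n → ℝ := fun i => -(∑ l, θ l * a i l) with hu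
  set Yf : ℝ := ∑ i, (ω i).2 * f (ω i).1 with hYf
  set Yf₀ : ℝ := ∑ i, (ω i).2 * f₀ (ω i).1 with hYf₀
  -- U-statistic decomposition
  have hinner : ∀ i j : Fin n,
      (∑ l, (a i l - θ l) * (a j l - θ l))
        = (∑ l, a i l * a j l) + (u i + u j + K) := by
    intro i j
    have hpt : ∀ l, (a i l - θ l) * (a j l - θ l)
        = a i l * a j l + ((-(θ l * a i l)) + (-(θ l * a j l)) + θ l * θ l) := by
      intro l; ring
    rw [Finset.sum_congr rfl fun l _ => hpt l, Finset.sum_add_distrib,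
      Finset.sum_add_distrib, Finset.sum_add_distrib, Finset.sum_neg_distrib,
      Finset.sum_neg_distrib]
  have hU : Utilde e θ n ω
      = thetaHat e n ω + ((2 / (n : ℝ)) * (∑ i, u i) + K) := by
    unfold Utilde thetaHat
    have hsplit : (∑ i : Fin n, ∑ j : Fin n,
        if i ≠ j then (∑ l, (a i l - θ l) * (a j l - θ l)) else 0)
        = (∑ i : Fin n, ∑ j : Fin n, if i ≠ j then (∑ l, a i l * a j l) else 0)
          + (∑ i : Fin n, ∑ j : Fin n, if i ≠ j then (u i + u j + K) else 0) := by
      rw [← Finset.sum_add_distrib]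
      refine Finset.sum_congr rfl fun i _ => ?_
      rw [← Finset.sum_add_distrib]
      refine Finset.sum_congr rfl fun j _ => ?_
      by_cases h : i = j <;> simp [h, hinner i j]
    rw [hsplit, pair_sum, mul_add]
    congr 1
    field_simp
  rw [hU]
  -- empirical sums
  have hw1sum : (∑ i, (ω i).2 * ((∑ l, θ l * e l (ω i).1) - f (ω i).1))
      = -(∑ i, u i) - Yf := by
    have h0 : ∀ i : Fin n, (ω i).2 * ((∑ l, θ l * e l (ω i).1) - f (ω i).1)
        = (∑ l, θ l * a i l) - (ω i).2 * f (ω i).1 := by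
      intro i
      rw [mul_sub, Finset.mul_sum]
      congr 1
      exact Finset.sum_congr rfl fun l _ => by simp only [ha]; ring
    rw [Finset.sum_congr rfl fun i _ => h0 i, Finset.sum_sub_distrib, hu, hYf]
    simp
  have hw2sum : (∑ i, (ω i).2 * (f (ω i).1 - f₀ (ω i).1)) = Yf - Yf₀ := by
    rw [hYf, hYf₀, ← Finset.sum_sub_distrib]
    exact Finset.sum_congr rfl fun i _ => by ring
  unfold RHat PnP
  rw [hw1sum, hw2sum, hE1, hE2, hE3, hE4, hHpow]
  ring


/-- Hoeffding-type decomposition of `R̂_n`: with `θ_ℓ = E[Y e_ℓ(X)] = ⟨f, e_ℓ⟩_{L²(μ)}` and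
`Π_S` the orthogonal projection onto the span of the finite orthonormal family `{e_ℓ}`,
almost surely
`R̂_n = Ũ_n + 2(P_n−P)(Π_S f − f) − ‖f − Π_S f‖² + 2(P_n−P)(f − f₀) + ‖f − f₀‖²`. -/
theorem RHat_decomposition
    (M : ℝ) (hM : 0 < M)
    (ι : Type) [Fintype ι] [DecidableEq ι] (e : ι → ℝ → ℝ)
    (μ : Measure ℝ) [IsProbabilityMeasure μ]
    (ν : Measure (ℝ × ℝ)) [IsProbabilityMeasure ν]
    (f f₀ : ℝ → ℝ) (n : ℕ) (hn : 2 ≤ n)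
    -- the orthonormal family, made of bounded measurable functions
    (hemeas : ∀ l, Measurable (e l))
    (hebdd : ∀ l, ∃ b : ℝ, ∀ x, |e l x| ≤ b)
    (hortho : ∀ l l', (∫ x, e l x * e l' x ∂μ) = if l = l' then 1 else 0)
    -- regression function and null function, bounded and measurable
    (hfmeas : Measurable f) (hfbdd : ∃ b : ℝ, ∀ x, |f x| ≤ b)
    (hf₀meas : Measurable f₀) (hf₀bdd : ∃ b : ℝ, ∀ x, |f₀ x| ≤ b)
    -- `ν` is the law of `(X,Y)`: marginal `μ`, values in `[0,1]×[−M,M]`,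
    -- `|f(X) − Y| ≤ M` a.s., and `E(ε|X) = 0`
    (hmarg : ν.map Prod.fst = μ)
    (hsupp : ∀ᵐ z ∂ν, z.1 ∈ Set.Icc (0 : ℝ) 1 ∧ z.2 ∈ Set.Icc (-M) M ∧ |f z.1 - z.2| ≤ M)
    (hreg : ∀ w : ℝ → ℝ, Measurable w → (∃ b : ℝ, ∀ x, |w x| ≤ b) →
      ∫ z, z.2 * w z.1 ∂ν = ∫ x, f x * w x ∂μ) :
    (∀ l, (∫ z, z.2 * e l z.1 ∂ν) = ∫ x, f x * e l x ∂μ) ∧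
    (∀ᵐ ω ∂(Measure.pi fun _ : Fin n => ν),
      RHat e f₀ μ n ω
        = Utilde e (fun l => ∫ z, z.2 * e l z.1 ∂ν) n ω
          + 2 * PnP μ f
              (fun x => (∑ l : ι, (∫ x', f x' * e l x' ∂μ) * e l x) - f x) n ω
          - (∫ x, (f x - ∑ l : ι, (∫ x', f x' * e l x' ∂μ) * e l x) ^ 2 ∂μ)
          + 2 * PnP μ f (fun x => f x - f₀ x) n ω
          + (∫ x, (f x - f₀ x) ^ 2 ∂μ)) := by
  have hθν : ∀ l, (∫ z, z.2 * e l z.1 ∂ν) = ∫ x, f x * e l x ∂μ :=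
    fun l => hreg (e l) (hemeas l) (hebdd l)
  refine ⟨hθν, Filter.Eventually.of_forall fun ω => ?_⟩
  have hfun : (fun l => ∫ z, z.2 * e l z.1 ∂ν) = fun l => ∫ x, f x * e l x ∂μ :=
    funext hθν
  rw [hfun]
  exact key ι e μ f f₀ n hn hemeas hebdd hortho hfmeas hfbdd hf₀meas hf₀bdd ω

end Stmt6
end
end

section
/- Let μ be a probability measure on [0,1] that is absolutely continuous with respect to Lebesgue measure with density g satisfying 0 < c ≤ g(x) ≤ C < ∞ for almost every x, and let G(x) = μ([0,x]). Then for every Hilbert basis (complete orthonormal system) {e_i}_{i∈I} of L²([0,1], Lebesgue), the family {e_i ∘ G}_{i∈I} is a Hilbert basis of L²([0,1], μ); that is, the warped system is orthonormal and total in L²([0,1], μ). -/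
/-!
The distribution function `G` of `μ` is continuous, because `μ` has no atoms, and strictly
increasing on `[0,1]`, because the density is bounded below. Hence `G` carries `μ` to Lebesgue
measure on `[0,1]` and has a monotone, hence measurable, left inverse `H` there. Orthonormality
is the change of variables `y = G x`. For totality, a `w` orthogonal to every `e i ∘ G` equals
`(w ∘ H) ∘ G` `μ`-a.e., so `w ∘ H` is orthogonal to every `e i` and therefore vanishes.
-/

open MeasureTheory ProbabilityTheory Set

theorem StrictMonoOn.exists_monotone_leftInvOn_Icc {α β : Type*}
    [ConditionallyCompleteLinearOrder α] [LinearOrder β] {f : α → β} {a b : α}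
    (hf : StrictMonoOn f (Icc a b)) : ∃ g : β → α, Monotone g ∧ LeftInvOn g f (Icc a b) := by
  have hbdd : ∀ t, BddBelow (insert b {x ∈ Icc a b | t ≤ f x}) := fun t =>
    (bddBelow_Icc.mono (sep_subset _ _)).insert b
  refine ⟨fun t => sInf (insert b {x ∈ Icc a b | t ≤ f x}), fun t t' htt' => ?_, fun x hx => ?_⟩
  · exact csInf_le_csInf (hbdd t) (insert_nonempty _ _)
      (insert_subset_insert fun y hy => ⟨hy.1, htt'.trans hy.2⟩)
  · refine le_antisymm (csInf_le (hbdd _) (Or.inr ⟨hx, le_rfl⟩)) (le_csInf (insert_nonempty _ _) ?_)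
    rintro y (rfl | ⟨hy, hfy⟩)
    · exact hx.2
    · exact (hf.le_iff_le hx hy).1 hfy

theorem MeasureTheory.Measure.smul_le_withDensity_ofReal {α : Type*} [MeasurableSpace α]
    {ν : Measure α} {g : α → ℝ} {c : ℝ} (hg : ∀ᵐ x ∂ν, c ≤ g x) :
    ENNReal.ofReal c • ν ≤ ν.withDensity fun x => ENNReal.ofReal (g x) := by
  rw [← withDensity_const]
  exact withDensity_mono (hg.mono fun x hx => ENNReal.ofReal_le_ofReal hx)

namespace ProbabilityTheory

variable {μ : Measure ℝ} [IsProbabilityMeasure μ]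

theorem continuous_cdf [NullSingletonClass μ] : Continuous (cdf μ) := by
  refine continuous_iff_continuousAt.2 fun x =>
    continuousAt_iff_continuous_left_right.2 ⟨?_, (cdf μ).right_continuous x⟩
  have hjump := measure_singleton (μ := μ) x
  rw [← measure_cdf μ, StieltjesFunction.measure_singleton, ENNReal.ofReal_eq_zero,
    sub_nonpos] at hjump
  exact continuousWithinAt_Iio_iff_Iic.1 <| (monotone_cdf μ).continuousWithinAt_Iio_iff_leftLim_eq.2
    (le_antisymm ((monotone_cdf μ).leftLim_le le_rfl) hjump)

theorem strictMonoOn_cdf {s : Set ℝ} (hs : ∀ x ∈ s, ∀ y ∈ s, x < y → μ (Ioc x y) ≠ 0) :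
    StrictMonoOn (cdf μ) s := by
  intro x hx y hy hxy
  have hpos := hs x hx y hy hxy
  rwa [← measure_cdf μ, StieltjesFunction.measure_Ioc, ne_eq, ENNReal.ofReal_eq_zero, not_le,
    sub_pos] at hpos

theorem cdf_eq_measureReal_Icc (hμ : ∀ᵐ x ∂μ, 0 ≤ x) (x : ℝ) :
    cdf μ x = μ.real (Icc 0 x) := by
  rw [cdf_eq_real, ← Ici_inter_Iic, inter_comm, measureReal_def, measureReal_def,
    measure_inter_conull (t := Ici 0) (mem_ae_iff.1 hμ)]

theorem map_cdf_eq_restrict_Icc [NullSingletonClass μ] (hμ : ∀ᵐ x ∂μ, x ∈ Icc (0 : ℝ) 1)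
    (hmono : StrictMonoOn (cdf μ) (Icc 0 1)) :
    μ.map (cdf μ) = volume.restrict (Icc 0 1) := by
  have hnonneg : ∀ᵐ x ∂μ, 0 ≤ x := hμ.mono fun x hx => hx.1
  have h0 : cdf μ 0 = 0 := by simp [cdf_eq_measureReal_Icc hnonneg, measureReal_def]
  have h1 : cdf μ 1 = 1 := by
    rw [cdf_eq_measureReal_Icc hnonneg, measureReal_def,
      (mem_ae_iff_prob_eq_one measurableSet_Icc).1 hμ, ENNReal.toReal_one]
  refine Measure.ext_of_Iic _ _ fun t => ?_
  have hI : Iic t ∩ Icc 0 1 = Icc 0 (min t 1) := by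
    ext x
    simp only [mem_inter_iff, mem_Iic, mem_Icc, le_min_iff]
    tauto
  rw [Measure.map_apply (monotone_cdf μ).measurable measurableSet_Iic,
    Measure.restrict_apply measurableSet_Iic, hI, Real.volume_Icc, sub_zero]
  rcases lt_or_ge t 0 with ht0 | ht0
  · have hpre : cdf μ ⁻¹' Iic t = ∅ :=
      eq_empty_of_forall_notMem fun x hx => (cdf_nonneg μ x).not_gt (lt_of_le_of_lt hx ht0)
    rw [hpre, measure_empty, ENNReal.ofReal_of_nonpos (min_le_of_left_le ht0.le)]
  rcases le_or_gt t 1 with ht1 | ht1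
  · obtain ⟨s, hs, rfl⟩ := intermediate_value_Icc zero_le_one continuous_cdf.continuousOn
      (show t ∈ Icc (cdf μ 0) (cdf μ 1) by rw [h0, h1]; exact ⟨ht0, ht1⟩)
    have hpre : cdf μ ⁻¹' Iic (cdf μ s) =ᵐ[μ] Iic s :=
      Filter.eventuallyEq_set.2 (hμ.mono fun x hx => hmono.le_iff_le hx hs)
    rw [measure_congr hpre, ← ofReal_cdf, min_eq_left ht1]
  · have hpre : cdf μ ⁻¹' Iic t = univ :=
      eq_univ_of_forall fun x => (cdf_le_one μ x).trans ht1.le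
    rw [hpre, measure_univ, min_eq_right ht1.le, ENNReal.ofReal_one]

end ProbabilityTheory

namespace MeasureTheory

variable {α β ι : Type*} [MeasurableSpace α] [MeasurableSpace β] {μ : Measure α} {ν : Measure β}
  {G : α → β}

theorem MeasurePreserving.ae_eq_zero_of_integral_mul_comp_eq_zero (hG : MeasurePreserving G μ ν)
    {H : β → α} (hH : Measurable H) (hHG : ∀ᵐ x ∂μ, H (G x) = x)
    {e : ι → β → ℝ} (he : ∀ i, Measurable (e i))
    (htotal : ∀ v : β → ℝ, Measurable v → MemLp v 2 ν → (∀ i, ∫ y, v y * e i y ∂ν = 0) →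
      v =ᵐ[ν] 0)
    {w : α → ℝ} (hw : Measurable w) (hwL2 : MemLp w 2 μ)
    (hperp : ∀ i, ∫ x, w x * e i (G x) ∂μ = 0) : w =ᵐ[μ] 0 := by
  have hv : Measurable (w ∘ H) := hw.comp hH
  have hwv : w =ᵐ[μ] w ∘ H ∘ G := hHG.mono fun x hx => by simp [hx]
  have hvL2 : MemLp (w ∘ H) 2 ν :=
    ⟨hv.aestronglyMeasurable, by
      rw [← eLpNorm_comp_measurePreserving hv.aestronglyMeasurable hG]; exact (hwL2.ae_eq hwv).2⟩
  have hv0 : w ∘ H =ᵐ[ν] 0 := htotal _ hv hvL2 fun i => by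
    rw [← hperp i, ← hG.map_eq, integral_map hG.aemeasurable (by fun_prop)]
    exact integral_congr_ae (hwv.mono fun x hx => by simp [hx])
  exact hwv.trans (hG.quasiMeasurePreserving.ae_eq_comp hv0)

end MeasureTheory

theorem warped_system_is_hilbert_basis_general
    (μ : Measure ℝ) [IsProbabilityMeasure μ]
    (g : ℝ → ℝ) (c C : ℝ) (hc : 0 < c)
    (hμ : μ = (volume.restrict (Set.Icc (0 : ℝ) 1)).withDensity
      (fun x => ENNReal.ofReal (g x)))
    (hg : ∀ᵐ x ∂(volume.restrict (Set.Icc (0 : ℝ) 1)), c ≤ g x ∧ g x ≤ C)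
    (G : ℝ → ℝ) (hG : ∀ x, G x = (μ (Set.Icc (0 : ℝ) x)).toReal)
    (ι : Type) [DecidableEq ι] (e : ι → ℝ → ℝ)
    (hmeas : ∀ i, Measurable (e i))
    -- `{e_i}` is orthonormal in L²([0,1], Lebesgue)
    (hortho : ∀ i j, (∫ y in Set.Icc (0 : ℝ) 1, e i y * e j y) = if i = j then 1 else 0)
    -- `{e_i}` is total in L²([0,1], Lebesgue)
    (htotal : ∀ w : ℝ → ℝ, Measurable w →
      MemLp w 2 (volume.restrict (Set.Icc (0 : ℝ) 1)) →
      (∀ i, (∫ y in Set.Icc (0 : ℝ) 1, w y * e i y) = 0) →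
      w =ᵐ[volume.restrict (Set.Icc (0 : ℝ) 1)] 0) :
    -- `{e_i ∘ G}` is orthonormal in L²([0,1], μ)
    (∀ i j, (∫ x, e i (G x) * e j (G x) ∂μ) = if i = j then 1 else 0) ∧
    -- `{e_i ∘ G}` is total in L²([0,1], μ)
    (∀ w : ℝ → ℝ, Measurable w → MemLp w 2 μ →
      (∀ i, (∫ x, w x * e i (G x) ∂μ) = 0) → w =ᵐ[μ] 0) := by
  have hac : μ ≪ volume.restrict (Icc 0 1) := hμ ▸ withDensity_absolutelyContinuous _ _
  have hμI : ∀ᵐ x ∂μ, x ∈ Icc (0 : ℝ) 1 := hac.ae_le (ae_restrict_mem measurableSet_Icc)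
  have : NullSingletonClass μ := ⟨fun x => hac (measure_singleton x)⟩
  obtain rfl : G = cdf μ :=
    funext fun x => (hG x).trans (cdf_eq_measureReal_Icc (hμI.mono fun _ hx => hx.1) x).symm
  have hlow : ENNReal.ofReal c • volume.restrict (Icc (0 : ℝ) 1) ≤ μ :=
    hμ ▸ Measure.smul_le_withDensity_ofReal (hg.mono fun _ hx => hx.1)
  have hmono : StrictMonoOn (cdf μ) (Icc 0 1) := strictMonoOn_cdf fun x hx y hy hxy => by
    refine ne_of_gt (lt_of_lt_of_le ?_ (hlow (Ioc x y)))
    rw [Measure.smul_apply, Measure.restrict_apply measurableSet_Ioc,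
      inter_eq_left.2 (Ioc_subset_Icc_self.trans (Icc_subset_Icc hx.1 hy.2)), Real.volume_Ioc,
      smul_eq_mul]
    exact ENNReal.mul_pos (ENNReal.ofReal_pos.2 hc).ne' (ENNReal.ofReal_pos.2 (sub_pos.2 hxy)).ne'
  have hmp : MeasurePreserving (cdf μ) μ (volume.restrict (Icc 0 1)) :=
    ⟨(monotone_cdf μ).measurable, map_cdf_eq_restrict_Icc hμI hmono⟩
  obtain ⟨H, hH, hHG⟩ := hmono.exists_monotone_leftInvOn_Icc
  refine ⟨fun i j => ?_, fun w hw hwL2 hperp => ?_⟩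
  · rw [← hortho, ← hmp.map_eq, integral_map hmp.aemeasurable (by fun_prop)]
  · exact hmp.ae_eq_zero_of_integral_mul_comp_eq_zero hH.measurable (hμI.mono fun x hx => hHG hx)
      hmeas htotal hw hwL2 hperp

/-- If `μ` is a probability measure on `[0,1]` with density `g` (w.r.t. Lebesgue measure)
satisfying `0 < c ≤ g ≤ C < ∞` a.e., and `G(x) = μ([0,x])`, then for every Hilbert basis
(total orthonormal system) `{e_i}` of `L²([0,1], Lebesgue)`, the warped family
`{e_i ∘ G}` is a Hilbert basis of `L²([0,1], μ)`: it is orthonormal and total. -/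
theorem warped_system_is_hilbert_basis
    (μ : Measure ℝ) [IsProbabilityMeasure μ]
    (g : ℝ → ℝ) (c C : ℝ) (hc : 0 < c) (hcC : c ≤ C)
    (hμ : μ = (volume.restrict (Set.Icc (0 : ℝ) 1)).withDensity
      (fun x => ENNReal.ofReal (g x)))
    (hg : ∀ᵐ x ∂(volume.restrict (Set.Icc (0 : ℝ) 1)), c ≤ g x ∧ g x ≤ C)
    (G : ℝ → ℝ) (hG : ∀ x, G x = (μ (Set.Icc (0 : ℝ) x)).toReal)
    (ι : Type) [DecidableEq ι] (e : ι → ℝ → ℝ)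
    (hmeas : ∀ i, Measurable (e i))
    (hL2 : ∀ i, MemLp (e i) 2 (volume.restrict (Set.Icc (0 : ℝ) 1)))
    -- `{e_i}` is orthonormal in L²([0,1], Lebesgue)
    (hortho : ∀ i j, (∫ y in Set.Icc (0 : ℝ) 1, e i y * e j y) = if i = j then 1 else 0)
    -- `{e_i}` is total in L²([0,1], Lebesgue)
    (htotal : ∀ w : ℝ → ℝ, Measurable w →
      MemLp w 2 (volume.restrict (Set.Icc (0 : ℝ) 1)) →
      (∀ i, (∫ y in Set.Icc (0 : ℝ) 1, w y * e i y) = 0) →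
      w =ᵐ[volume.restrict (Set.Icc (0 : ℝ) 1)] 0) :
    -- `{e_i ∘ G}` is orthonormal in L²([0,1], μ)
    (∀ i j, (∫ x, e i (G x) * e j (G x) ∂μ) = if i = j then 1 else 0) ∧
    -- `{e_i ∘ G}` is total in L²([0,1], μ)
    (∀ w : ℝ → ℝ, Measurable w → MemLp w 2 μ →
      (∀ i, (∫ x, w x * e i (G x) ∂μ) = 0) → w =ᵐ[μ] 0) :=
  warped_system_is_hilbert_basis_general μ g c C hc hμ hg G hG ι e hmeas hortho htotal
end
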